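/- arXiv:1901.07226 — 6 statements merged into one kernel-verified Lean document; each statement's English description precedes it below -/
import Mathlib

section
/- Suppose an AON has N_A nodes with access probability τ_A and a TON has N_T nodes with access probability τ_T, with σ_S = σ_C. Then the AON's expected age payoff u_A(τ_A) (to be minimized) is minimized over τ_A ∈ [0,1] at τ_A* = (N_A(σ_I − σ_S) + δ̄)/(N_A(σ_I − σ_C + δ̄)) if δ̄ > N_A(σ_S − σ_I), and at τ_A* = 0 otherwise, where δ̄ is the average age at the start of the slot. -/
def uA (NA NT : ℕ) (σI σS σC δ τA τT : ℝ) : ℝ :=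
  (1 - τA * (1 - τA) ^ (NA - 1) * (1 - τT) ^ NT) * δ
    + (1 - τA) ^ NA * (1 - τT) ^ NT * (σI - σC) + σC
    + ((NA : ℝ) * τA * (1 - τA) ^ (NA - 1) * (1 - τT) ^ NT
        + (NT : ℝ) * τT * (1 - τT) ^ (NT - 1) * (1 - τA) ^ NA) * (σS - σC)

/-! With `σS = σC` the success term vanishes, and writing `x = 1 - τA`, `NA = m + 1`,
`uA = δ + σC - (1 - τT) ^ NT * (δ xᵐ - b xᵐ⁺¹)` with `b = σI - σC + δ > 0`. Minimising `uA` thus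
means maximising `δ xᵐ - b xᵐ⁺¹` over `[0, 1]`. Its derivative has the sign of
`m δ - (m + 1) b x`, so the maximum is at the critical point `m δ / ((m + 1) b)` clipped to `1`,
and `1 - τAs` is exactly that clipped point. -/

lemma uA_succ_of_σS_eq_σC (m NT : ℕ) (σI σC δ τA τT : ℝ) :
    uA (m + 1) NT σI σC σC δ τA τT
      = δ + σC - (1 - τT) ^ NT * (δ * (1 - τA) ^ m - (σI - σC + δ) * (1 - τA) ^ (m + 1)) := by
  simp only [uA, Nat.add_sub_cancel, sub_self, mul_zero, add_zero]
  ring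

section PowerGap

variable (m : ℕ) (d b : ℝ)

lemma hasDerivAt_mul_pow_sub_mul_pow (y : ℝ) :
    HasDerivAt (fun x : ℝ => d * x ^ m - b * x ^ (m + 1))
      (d * (m * y ^ (m - 1)) - b * ((m + 1 : ℕ) * y ^ m)) y :=
  ((hasDerivAt_pow m y).const_mul d).sub ((hasDerivAt_pow (m + 1) y).const_mul b)

lemma mul_deriv_mul_pow_sub_mul_pow (y : ℝ) :
    y * (d * (m * y ^ (m - 1)) - b * ((m + 1 : ℕ) * y ^ m))
      = y ^ m * (m * d - (m + 1) * b * y) := by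
  rcases m with _ | k
  · simp only [CharP.cast_eq_zero, zero_mul, mul_zero, pow_zero, zero_add, Nat.cast_one]
    ring
  · simp only [Nat.add_sub_cancel]
    push_cast
    ring

lemma mul_pow_sub_mul_pow_le_of_mem_Icc (hb : 0 < b) (hd : 0 ≤ d) {x : ℝ}
    (hx : x ∈ Set.Icc (0 : ℝ) 1) :
    d * x ^ m - b * x ^ (m + 1)
      ≤ d * min (m * d / ((m + 1) * b)) 1 ^ m - b * min (m * d / ((m + 1) * b)) 1 ^ (m + 1) := by
  set t : ℝ := m * d / ((m + 1) * b)
  set s : ℝ := min t 1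
  set f : ℝ → ℝ := fun x => d * x ^ m - b * x ^ (m + 1)
  have hden : 0 < ((m : ℝ) + 1) * b := by positivity
  have hs0 : 0 ≤ s := le_min (by positivity) zero_le_one
  have hf : ∀ y, HasDerivAt f _ y := hasDerivAt_mul_pow_sub_mul_pow m d b
  have hcont : Continuous f := by fun_prop
  have hsign : ∀ y > 0, 0 ≤ deriv f y ↔ y ≤ t := fun y hy => by
    rw [(hf y).deriv, ← mul_nonneg_iff_of_pos_left hy, mul_deriv_mul_pow_sub_mul_pow,
      mul_nonneg_iff_of_pos_left (by positivity), sub_nonneg, le_div_iff₀ hden]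
    constructor <;> intro h <;> linarith
  have hmono : MonotoneOn f (Set.Icc 0 s) := by
    refine monotoneOn_of_deriv_nonneg (convex_Icc _ _) hcont.continuousOn
      (fun y _ => (hf y).differentiableAt.differentiableWithinAt) fun y hy => ?_
    rw [interior_Icc] at hy
    exact (hsign y hy.1).2 (lt_min_iff.1 hy.2).1.le
  have hanti : AntitoneOn f (Set.Icc s 1) := by
    refine antitoneOn_of_deriv_nonpos (convex_Icc _ _) hcont.continuousOn
      (fun y _ => (hf y).differentiableAt.differentiableWithinAt) fun y hy => ?_
    rw [interior_Icc] at hy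
    have hty : t < y := (min_lt_iff.1 hy.1).resolve_right hy.2.not_gt
    exact le_of_not_gt fun h => ((hsign y (hs0.trans_lt hy.1)).1 h.le).not_gt hty
  rcases le_total x s with h | h
  · exact hmono ⟨hx.1, h⟩ ⟨hs0, le_rfl⟩ h
  · exact hanti ⟨le_rfl, min_le_right _ _⟩ ⟨h, hx.2⟩ h

end PowerGap

lemma one_sub_optimal_access_eq_min (m : ℕ) (σI σS δ : ℝ) (hb : 0 < σI - σS + δ) :
    1 - (if ((m + 1 : ℕ) : ℝ) * (σS - σI) < δ then
        (((m + 1 : ℕ) : ℝ) * (σI - σS) + δ) / (((m + 1 : ℕ) : ℝ) * (σI - σS + δ)) else 0)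
      = min (m * δ / ((m + 1) * (σI - σS + δ))) 1 := by
  have hden : 0 < ((m : ℝ) + 1) * (σI - σS + δ) := by positivity
  push_cast
  split_ifs with h
  · rw [min_eq_left ((div_le_one hden).2 (by nlinarith))]
    field_simp
    ring
  · rw [min_eq_right ((one_le_div hden).2 (by nlinarith)), sub_zero]

theorem stmt4_general (NA NT : ℕ) (hNA : 1 ≤ NA)
    (σI σS σC δ τT : ℝ) (hσI : 0 < σI) (hI : σI < σS) (hSC : σS = σC)
    (hδ : σS ≤ δ) (hτT : τT ∈ Set.Ico (0 : ℝ) 1)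
    (τAs : ℝ)
    (hτAs : τAs = if (NA : ℝ) * (σS - σI) < δ then
        ((NA : ℝ) * (σI - σS) + δ) / ((NA : ℝ) * (σI - σC + δ)) else 0) :
    ∀ τA ∈ Set.Icc (0 : ℝ) 1,
      uA NA NT σI σS σC δ τAs τT ≤ uA NA NT σI σS σC δ τA τT := by
  subst hSC
  obtain ⟨m, rfl⟩ : ∃ m, NA = m + 1 := ⟨NA - 1, by omega⟩
  intro τA hτA
  have hb : 0 < σI - σS + δ := by linarith
  have hτAs' : 1 - τAs = min (m * δ / ((m + 1) * (σI - σS + δ))) 1 := by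
    rw [hτAs, one_sub_optimal_access_eq_min m σI σS δ hb]
  have hTON : 0 ≤ (1 - τT) ^ NT := pow_nonneg (by linarith [hτT.2]) NT
  have hgap := mul_pow_sub_mul_pow_le_of_mem_Icc m δ _ hb (by linarith) (x := 1 - τA)
    ⟨by linarith [hτA.2], by linarith [hτA.1]⟩
  rw [uA_succ_of_σS_eq_σC, uA_succ_of_σS_eq_σC, hτAs']
  nlinarith [mul_le_mul_of_nonneg_left hgap hTON]

theorem stmt4 (NA NT : ℕ) (hNA : 1 ≤ NA) (hNT : 1 ≤ NT)
    (σI σS σC δ τT : ℝ) (hσI : 0 < σI) (hI : σI < σS) (hSC : σS = σC)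
    (hδ : σS ≤ δ) (hτT : τT ∈ Set.Ico (0 : ℝ) 1)
    (τAs : ℝ)
    (hτAs : τAs = if (NA : ℝ) * (σS - σI) < δ then
        ((NA : ℝ) * (σI - σS) + δ) / ((NA : ℝ) * (σI - σC + δ)) else 0) :
    ∀ τA ∈ Set.Icc (0 : ℝ) 1,
      uA NA NT σI σS σC δ τAs τT ≤ uA NA NT σI σS σC δ τA τT :=
  stmt4_general NA NT hNA σI σS σC δ τT hσI hI hSC hδ hτT τAs hτAs
end

section
/- Under σ_S = σ_C, the AON's equilibrium access probability τ_A* = (N_A(σ_I − σ_S) + δ̄)/(N_A(σ_I − σ_C + δ̄)) (when δ̄ > N_A(σ_S − σ_I)) does not depend on the TON's access probability τ_T or on the number of TON nodes N_T. -/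
/-- Young-type AM-GM: `(m+1) p^m q ≤ m p^(m+1) + q^(m+1)` for nonnegative reals. -/
lemma key2 (m : ℕ) (p q : ℝ) (hp : 0 ≤ p) (hq : 0 ≤ q) :
    ((m : ℝ) + 1) * p ^ m * q ≤ (m : ℝ) * p ^ (m + 1) + q ^ (m + 1) := by
  induction m with
  | zero => simp
  | succ n ih =>
    have h1 : ((n : ℝ) + 1) * p ^ (n + 1) * q ≤ (n : ℝ) * p ^ (n + 2) + p * q ^ (n + 1) := by
      have h := mul_le_mul_of_nonneg_left ih hp
      calc ((n : ℝ) + 1) * p ^ (n + 1) * q = p * (((n : ℝ) + 1) * p ^ n * q) := by ring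
        _ ≤ p * ((n : ℝ) * p ^ (n + 1) + q ^ (n + 1)) := h
        _ = (n : ℝ) * p ^ (n + 2) + p * q ^ (n + 1) := by ring
    have hfac : 0 ≤ (p - q) * (p ^ (n + 1) - q ^ (n + 1)) := by
      rcases le_total p q with h | h
      · have h' := pow_le_pow_left₀ hp h (n + 1)
        nlinarith [mul_nonneg (sub_nonneg.2 h) (sub_nonneg.2 h')]
      · have h' := pow_le_pow_left₀ hq h (n + 1)
        exact mul_nonneg (by linarith) (by linarith)
    have h2 : p * q ^ (n + 1) + p ^ (n + 1) * q ≤ p ^ (n + 2) + q ^ (n + 2) := by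
      have e1 : p ^ (n + 2) = p * p ^ (n + 1) := by ring
      have e2 : q ^ (n + 2) = q * q ^ (n + 1) := by ring
      rw [e1, e2]
      nlinarith [hfac]
    push_cast
    nlinarith [h1, h2]

/-- The maximum of `u ↦ u^m (δ - u)` over `u ≥ 0` is attained at `v = mδ/(m+1)`. -/
lemma maxlem (m : ℕ) (δ u v : ℝ) (hδ : 0 < δ) (hu : 0 ≤ u)
    (hv : ((m : ℝ) + 1) * v = (m : ℝ) * δ) :
    u ^ m * (δ - u) ≤ v ^ m * (δ - v) := by
  rcases Nat.eq_zero_or_pos m with rfl | hm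
  · have : v = 0 := by push_cast at hv; linarith
    subst this
    simp
    linarith
  · have hm' : (0 : ℝ) < m := by exact_mod_cast hm
    have hvpos : 0 ≤ v := by nlinarith
    have h1 : (m : ℝ) * (u ^ m * (δ - u)) =
        ((m : ℝ) + 1) * u ^ m * v - (m : ℝ) * u ^ (m + 1) := by
      linear_combination (-(u ^ m)) * hv
    have h2 : (m : ℝ) * (v ^ m * (δ - v)) = v ^ (m + 1) := by
      linear_combination (-(v ^ m)) * hv
    have h3 := key2 m u v hu hvpos
    have : (m : ℝ) * (u ^ m * (δ - u)) ≤ (m : ℝ) * (v ^ m * (δ - v)) := by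
      rw [h1, h2]; linarith
    exact le_of_mul_le_mul_left this hm'

/-- The AON equilibrium access probability minimizes `uA` for *every* choice of
the TON access probability `τT` and TON size `NT`; in particular it does not
depend on either of them. -/
theorem stmt5 (NA : ℕ) (hNA : 1 ≤ NA)
    (σI σS σC δ : ℝ) (hσI : 0 < σI) (hI : σI < σS) (hSC : σS = σC)
    (hδ : (NA : ℝ) * (σS - σI) < δ)
    (τAs : ℝ)
    (hτAs : τAs = ((NA : ℝ) * (σI - σS) + δ) / ((NA : ℝ) * (σI - σC + δ))) :
    ∀ (NT : ℕ), 1 ≤ NT → ∀ τT ∈ Set.Ico (0 : ℝ) 1, ∀ τA ∈ Set.Icc (0 : ℝ) 1,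
      uA NA NT σI σS σC δ τAs τT ≤ uA NA NT σI σS σC δ τA τT := by
  subst hSC
  obtain ⟨m, rfl⟩ : ∃ m, NA = m + 1 := ⟨NA - 1, (Nat.succ_pred_eq_of_pos hNA).symm⟩
  intro NT hNT τT hτT τA hτA
  obtain ⟨hτT0, hτT1⟩ := hτT
  obtain ⟨hτA0, hτA1⟩ := hτA
  set a : ℝ := σI - σS with ha_def
  have ha : a < 0 := by simp [ha_def]; linarith
  have hm1 : (1 : ℝ) ≤ (m : ℝ) + 1 := by
    have : (0 : ℝ) ≤ (m : ℝ) := Nat.cast_nonneg m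
    linarith
  have hcast : ((m + 1 : ℕ) : ℝ) = (m : ℝ) + 1 := by push_cast; ring
  rw [hcast] at hδ hτAs
  have hδpos : 0 < δ := by nlinarith
  have hA : 0 < a + δ := by nlinarith
  have hA0 : a + δ ≠ 0 := ne_of_gt hA
  have hm0 : ((m : ℝ) + 1) ≠ 0 := by positivity
  -- the key quantity
  have hv : ((m : ℝ) + 1) * ((a + δ) * (1 - τAs)) = (m : ℝ) * δ := by
    rw [hτAs]
    have : σI - σS + δ = a + δ := by simp [ha_def]
    rw [this]
    field_simp
    ring
  have hu : 0 ≤ (a + δ) * (1 - τA) := mul_nonneg hA.le (by linarith)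
  have hmax := maxlem m δ ((a + δ) * (1 - τA)) ((a + δ) * (1 - τAs)) hδpos hu hv
  -- relate uA to the reduced objective
  have hc : 0 ≤ (1 - τT) ^ NT := pow_nonneg (by linarith) _
  have huAeq : ∀ x : ℝ, uA (m + 1) NT σI σS σS δ x τT =
      δ + σS + (1 - τT) ^ NT * ((1 - x) ^ m * (a - (a + δ) * x)) := by
    intro x
    simp only [uA, Nat.add_sub_cancel, ha_def]
    ring
  rw [huAeq, huAeq]
  have hGA : ∀ x : ℝ, (a + δ) ^ m * ((1 - x) ^ m * (a - (a + δ) * x)) =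
      -(((a + δ) * (1 - x)) ^ m * (δ - (a + δ) * (1 - x))) := by
    intro x
    rw [mul_pow]
    ring
  have hApow : 0 < (a + δ) ^ m := pow_pos hA m
  have hG : (1 - τAs) ^ m * (a - (a + δ) * τAs) ≤ (1 - τA) ^ m * (a - (a + δ) * τA) := by
    have h1 := hGA τAs
    have h2 := hGA τA
    have : (a + δ) ^ m * ((1 - τAs) ^ m * (a - (a + δ) * τAs)) ≤
        (a + δ) ^ m * ((1 - τA) ^ m * (a - (a + δ) * τA)) := by
      rw [h1, h2]; linarith
    exact le_of_mul_le_mul_left this hApow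
  nlinarith [mul_le_mul_of_nonneg_left hG hc]
end

section
/- With σ_S = σ_C and N_A ≥ 2, the AON equilibrium access probability τ_A*(δ̄) = (N_A(σ_I − σ_S) + δ̄)/(N_A(σ_I − σ_C + δ̄)) is strictly increasing in δ̄ on the region δ̄ > N_A(σ_S − σ_I), and converges to 1/N_A as δ̄ → ∞. -/
open Filter

theorem stmt7 (NA : ℕ) (hNA : 2 ≤ NA)
    (σI σS σC : ℝ) (hσI : 0 < σI) (hI : σI < σS) (hSC : σS = σC) :
    StrictMonoOn
      (fun δ : ℝ => ((NA : ℝ) * (σI - σS) + δ) / ((NA : ℝ) * (σI - σC + δ)))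
      (Set.Ioi ((NA : ℝ) * (σS - σI))) ∧
    Tendsto
      (fun δ : ℝ => ((NA : ℝ) * (σI - σS) + δ) / ((NA : ℝ) * (σI - σC + δ)))
      atTop (nhds (1 / (NA : ℝ))) := by
  have hN : (2:ℝ) ≤ (NA:ℝ) := by exact_mod_cast hNA
  have hN0 : (0:ℝ) < (NA:ℝ) := by linarith
  subst hSC
  constructor
  · intro x hx y hy hxy
    simp only [Set.mem_Ioi] at hx hy
    have hc : (2:ℝ) * (σS - σI) ≤ (NA:ℝ) * (σS - σI) :=
      mul_le_mul_of_nonneg_right hN (by linarith)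
    have hxpos : 0 < (NA:ℝ) * (σI - σS + x) := by nlinarith
    have hypos : 0 < (NA:ℝ) * (σI - σS + y) := by nlinarith
    rw [div_lt_div_iff₀ hxpos hypos]
    have h1 : 0 < (σS - σI) * (y - x) := mul_pos (by linarith) (by linarith)
    nlinarith [mul_pos hN0 h1, mul_pos (mul_pos hN0 hN0) h1]
  · have key : Tendsto (fun δ : ℝ => (1/(NA:ℝ)) * (1 + ((NA:ℝ)*(σI - σS) - (σI - σS)) * (δ + (σI - σS))⁻¹)) atTop (nhds (1/(NA:ℝ))) := by
      have h1 : Tendsto (fun δ : ℝ => δ + (σI - σS)) atTop atTop :=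
        tendsto_atTop_add_const_right _ _ tendsto_id
      have h2 := (tendsto_inv_atTop_zero.comp h1).const_mul ((NA:ℝ)*(σI - σS) - (σI - σS))
      have h3 := (h2.const_add 1).const_mul (1/(NA:ℝ))
      simpa using h3
    refine Tendsto.congr' ?_ key
    filter_upwards [eventually_gt_atTop (σS - σI)] with δ hδ
    have hne : δ + (σI - σS) ≠ 0 := by intro h; nlinarith
    have hNne : (NA:ℝ) ≠ 0 := ne_of_gt hN0
    have h2 : (NA:ℝ) * (σI - σS + δ) ≠ 0 := mul_ne_zero hNne (fun h => hne (by linarith))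
    rw [eq_div_iff h2]
    field_simp
    ring
end

section
/- The strategy profile (τ_A*, τ_T*) with τ_T* = 1/N_T and τ_A* = max{0, (N_A(σ_I−σ_S)+δ̄)/(N_A(σ_I−σ_C+δ̄))} (the latter when δ̄ > N_A(σ_S−σ_I), else 0) is a Nash equilibrium of the stage game: neither player can improve its payoff by unilaterally changing its access probability. -/
def uT (NA NT : ℕ) (σS r τA τT : ℝ) : ℝ :=
  τT * (1 - τT) ^ (NT - 1) * (1 - τA) ^ NA * σS * r

theorem mul_pow_le_arith_mean_pow (m : ℕ) {x y : ℝ} (hx : 0 ≤ x) (hy : 0 ≤ y) :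
    x * y ^ m ≤ ((x + m * y) / (m + 1)) ^ (m + 1) := by
  have hm : (m : ℝ) + 1 ≠ 0 := by positivity
  have hamgm := Real.geom_mean_le_arith_mean2_weighted (w₁ := 1 / (m + 1)) (w₂ := m / (m + 1))
    (by positivity) (by positivity) hx hy (by field_simp; ring)
  calc x * y ^ m = (x ^ (1 / (m + 1) : ℝ) * y ^ (m / (m + 1) : ℝ)) ^ (m + 1) := by
        rw [mul_pow, ← Real.rpow_mul_natCast hx, ← Real.rpow_mul_natCast hy]
        push_cast
        rw [one_div_mul_cancel hm, div_mul_cancel₀ _ hm, Real.rpow_one, Real.rpow_natCast]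
    _ ≤ (1 / (m + 1) * x + m / (m + 1) * y) ^ (m + 1) :=
        pow_le_pow_left₀ (by positivity) hamgm _
    _ = ((x + m * y) / (m + 1)) ^ (m + 1) := by ring

/-- The maximizer of `t ↦ (1 - t) ^ m * (p + q * t)` on `[0, 1]` when `0 ≤ p` and `0 < q`;
the unconstrained one solves `q * (1 - t) = m * (p + q * t)`. -/
noncomputable def bestResponse (m : ℕ) (p q : ℝ) : ℝ :=
  max 0 ((q - m * p) / (q * (m + 1)))

section bestResponse

variable {m : ℕ} {p q t : ℝ}

theorem bestResponse_mem_Icc (hp : 0 ≤ p) (hq : 0 < q) : bestResponse m p q ∈ Set.Icc 0 1 := by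
  refine ⟨le_max_left _ _, max_le zero_le_one ?_⟩
  rw [div_le_one (by positivity)]
  nlinarith [mul_nonneg (Nat.cast_nonneg m : (0 : ℝ) ≤ m) hp]

theorem one_sub_pow_mul_le_of_le (hp : 0 ≤ p) (hqp : q ≤ m * p) (ht : t ∈ Set.Icc 0 1) :
    (1 - t) ^ m * (p + q * t) ≤ p := by
  obtain ⟨ht0, ht1⟩ := ht
  have hbernoulli : (1 + m * t) * (1 - t) ^ m ≤ 1 := by
    have hmean : (1 + m * t + m * (1 - t)) / (m + 1) = 1 := by field_simp; ring
    simpa [hmean] using mul_pow_le_arith_mean_pow m (x := 1 + m * t) (y := 1 - t)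
      (by positivity) (by linarith)
  calc (1 - t) ^ m * (p + q * t) ≤ (1 - t) ^ m * (p + m * p * t) := by
        gcongr
    _ = p * ((1 + m * t) * (1 - t) ^ m) := by ring
    _ ≤ p := mul_le_of_le_one_right hp hbernoulli

theorem one_sub_pow_mul_le_bestResponse_of_le (hp : 0 ≤ p) (hq : 0 < q) (hpq : m * p ≤ q)
    (ht : t ∈ Set.Icc 0 1) :
    (1 - t) ^ m * (p + q * t) ≤ (1 - bestResponse m p q) ^ m * (p + q * bestResponse m p q) := by
  obtain ⟨ht0, ht1⟩ := ht
  have hs : bestResponse m p q = (q - m * p) / (q * (m + 1)) :=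
    max_eq_right (div_nonneg (by linarith) (by positivity))
  rcases Nat.eq_zero_or_pos m with rfl | hm
  · rw [hs]
    simp only [pow_zero, one_mul, CharP.cast_eq_zero, zero_mul, sub_zero, zero_add, mul_one,
      div_self hq.ne']
    nlinarith
  set c : ℝ := m * (p + q) / (m + 1) with hc
  have hamgm := mul_pow_le_arith_mean_pow m (x := m * (p + q * t)) (y := q * (1 - t))
    (by positivity) (by nlinarith)
  have hmean : (m * (p + q * t) + m * (q * (1 - t))) / (m + 1) = c := by ring
  have hsc : 1 - bestResponse m p q = c / q := by rw [hs, hc]; field_simp; ring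
  have hsm : p + q * bestResponse m p q = c / m := by rw [hs, hc]; field_simp; ring
  have hmax : (1 - bestResponse m p q) ^ m * (p + q * bestResponse m p q) * (m * q ^ m)
      = c ^ (m + 1) := by
    rw [hsc, hsm, div_pow]
    field_simp
    ring
  rw [← mul_le_mul_iff_of_pos_right (by positivity : (0 : ℝ) < m * q ^ m), hmax, ← hmean]
  calc (1 - t) ^ m * (p + q * t) * (m * q ^ m) = m * (p + q * t) * (q * (1 - t)) ^ m := by
        rw [mul_pow]; ring
    _ ≤ _ := hamgm

theorem isMaxOn_bestResponse (hp : 0 ≤ p) (hq : 0 < q) :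
    IsMaxOn (fun t => (1 - t) ^ m * (p + q * t)) (Set.Icc 0 1) (bestResponse m p q) := by
  refine isMaxOn_iff.mpr fun t ht => ?_
  rcases le_total q (m * p) with hqp | hpq
  · have hs : bestResponse m p q = 0 :=
      max_eq_left (div_nonpos_of_nonpos_of_nonneg (by linarith) (by positivity))
    simpa [hs] using one_sub_pow_mul_le_of_le hp hqp ht
  · exact one_sub_pow_mul_le_bestResponse_of_le hp hq hpq ht

end bestResponse

theorem isMaxOn_one_sub_pow_mul_self (m : ℕ) :
    IsMaxOn (fun t => (1 - t) ^ m * t) (Set.Icc 0 1) (1 / ((m : ℝ) + 1)) := by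
  have h := isMaxOn_bestResponse (m := m) le_rfl one_pos
  simp only [bestResponse, mul_zero, sub_zero, one_mul, zero_add] at h
  rwa [max_eq_right (by positivity)] at h

theorem neg_uA_eq (a NT : ℕ) (σI σS δ τA τT : ℝ) :
    -uA (a + 1) NT σI σS σS δ τA τT
      = (1 - τT) ^ NT * ((1 - τA) ^ a * ((σS - σI) + (δ - σS + σI) * τA)) - (δ + σS) := by
  simp only [uA, Nat.add_sub_cancel]
  ring

theorem uT_eq (NA b : ℕ) (σS r τA τT : ℝ) :
    uT NA (b + 1) σS r τA τT = (1 - τA) ^ NA * σS * r * ((1 - τT) ^ b * τT) := by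
  simp only [uT, Nat.add_sub_cancel]
  ring

theorem aonEquilibrium_eq_bestResponse (a : ℕ) {σI σS δ : ℝ} (hq : 0 < δ - σS + σI) :
    (if ((a + 1 : ℕ) : ℝ) * (σS - σI) < δ then
        max 0 ((((a + 1 : ℕ) : ℝ) * (σI - σS) + δ) / (((a + 1 : ℕ) : ℝ) * (σI - σS + δ)))
      else 0) = bestResponse a (σS - σI) (δ - σS + σI) := by
  push_cast
  split_ifs with h
  · unfold bestResponse
    congr 1
    rw [div_eq_div_iff (by nlinarith) (by positivity)]
    ring
  · exact (max_eq_left (div_nonpos_of_nonpos_of_nonneg (by linarith) (by positivity))).symm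

theorem stmt10 (NA NT : ℕ) (hNA : 1 ≤ NA) (hNT : 1 ≤ NT)
    (σI σS σC δ r : ℝ) (hσI : 0 < σI) (hI : σI < σS) (hSC : σS = σC)
    (hδ : σS ≤ δ) (hr : 0 < r)
    (τAs τTs : ℝ)
    (hτAs : τAs = if (NA : ℝ) * (σS - σI) < δ then
        max 0 (((NA : ℝ) * (σI - σS) + δ) / ((NA : ℝ) * (σI - σC + δ))) else 0)
    (hτTs : τTs = 1 / (NT : ℝ)) :
    (∀ τA ∈ Set.Icc (0 : ℝ) 1,
        -uA NA NT σI σS σC δ τA τTs ≤ -uA NA NT σI σS σC δ τAs τTs) ∧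
    (∀ τT ∈ Set.Icc (0 : ℝ) 1,
        uT NA NT σS r τAs τT ≤ uT NA NT σS r τAs τTs) := by
  subst hSC
  obtain ⟨a, rfl⟩ : ∃ a, NA = a + 1 := ⟨NA - 1, by omega⟩
  obtain ⟨b, rfl⟩ : ∃ b, NT = b + 1 := ⟨NT - 1, by omega⟩
  have hp : 0 ≤ σS - σI := by linarith
  have hq : 0 < δ - σS + σI := by linarith
  rw [aonEquilibrium_eq_bestResponse a hq] at hτAs
  have hτTs' : τTs = 1 / (b + 1) := by rw [hτTs]; push_cast; rfl
  have hτAs1 : τAs ≤ 1 := hτAs ▸ (bestResponse_mem_Icc hp hq).2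
  have hτTs1 : τTs ≤ 1 := by rw [hτTs', div_le_one (by positivity)]; linarith
  refine ⟨fun τA hτA => ?_, fun τT hτT => ?_⟩
  · rw [neg_uA_eq, neg_uA_eq, hτAs]
    have hW : 0 ≤ (1 - τTs) ^ (b + 1) := pow_nonneg (by linarith) _
    have hmax := isMaxOn_iff.1 (isMaxOn_bestResponse (m := a) hp hq) τA hτA
    linarith [mul_le_mul_of_nonneg_left hmax hW]
  · rw [uT_eq, uT_eq, hτTs']
    have hK : 0 ≤ (1 - τAs) ^ (a + 1) * σS * r :=
      mul_nonneg (mul_nonneg (pow_nonneg (by linarith) _) (by linarith)) hr.le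
    exact mul_le_mul_of_nonneg_left (isMaxOn_iff.1 (isMaxOn_one_sub_pow_mul_self b) τT hτT) hK
end

section
/- The stationarity condition ∂u_A/∂τ_A = 0 for the AON's expected age (for general σ_S, σ_C) is solved by τ_A = [(1−τ_T)(δ̄ − N_A(σ_S−σ_I)) + N_A N_T τ_T(σ_S−σ_C)] / [(1−τ_T)N_A(δ̄ + σ_I − σ_C − N_A(σ_S−σ_C)) + N_A N_T τ_T(σ_S−σ_C)], provided the denominator is nonzero. -/
def uAStationaryNum (NA NT : ℕ) (σI σS σC δ τT : ℝ) : ℝ :=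
  (1 - τT) * (δ - (NA : ℝ) * (σS - σI)) + (NA : ℝ) * (NT : ℝ) * τT * (σS - σC)

def uAStationaryDen (NA NT : ℕ) (σI σS σC δ τT : ℝ) : ℝ :=
  (1 - τT) * (NA : ℝ) * (δ + σI - σC - (NA : ℝ) * (σS - σC))
    + (NA : ℝ) * (NT : ℝ) * τT * (σS - σC)

theorem hasDerivAt_one_sub_pow (n : ℕ) (t : ℝ) :
    HasDerivAt (fun s : ℝ => (1 - s) ^ (n + 1)) (-((n : ℝ) + 1) * (1 - t) ^ n) t := by
  refine (((hasDerivAt_id t).const_sub 1).pow (n + 1)).congr_deriv ?_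
  simp only [id_eq, Nat.add_sub_cancel]
  push_cast
  ring

theorem hasDerivAt_mul_one_sub_pow (n : ℕ) (t : ℝ) :
    HasDerivAt (fun s : ℝ => s * (1 - s) ^ (n + 1)) ((1 - t) ^ n * (1 - ((n : ℝ) + 2) * t)) t := by
  refine ((hasDerivAt_id t).mul (hasDerivAt_one_sub_pow n t)).congr_deriv ?_
  simp only [id_eq]
  ring

theorem hasDerivAt_uA (n m : ℕ) (σI σS σC δ τA τT : ℝ) :
    HasDerivAt (fun t => uA (n + 2) (m + 1) σI σS σC δ t τT)
      ((1 - τA) ^ n * (1 - τT) ^ m *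
        (uAStationaryDen (n + 2) (m + 1) σI σS σC δ τT * τA
          - uAStationaryNum (n + 2) (m + 1) σI σS σC δ τT)) τA := by
  have hp := hasDerivAt_mul_one_sub_pow n τA
  have hq := hasDerivAt_one_sub_pow (n + 1) τA
  have hu := ((((hp.mul_const ((1 - τT) ^ (m + 1))).const_sub 1).mul_const δ).add
      ((hq.mul_const ((1 - τT) ^ (m + 1))).mul_const (σI - σC))).add_const σC |>.add
    ((((hp.const_mul ((n : ℝ) + 2)).mul_const ((1 - τT) ^ (m + 1))).add
      (hq.const_mul (((m : ℝ) + 1) * τT * (1 - τT) ^ m))).mul_const (σS - σC))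
  refine (hu.congr_deriv ?_).congr_of_eventuallyEq (Filter.Eventually.of_forall fun t => ?_)
  · simp only [uAStationaryDen, uAStationaryNum]
    push_cast
    ring
  · simp only [uA, Nat.add_sub_cancel, Pi.add_apply]
    push_cast
    ring

theorem stmt11_general (NA NT : ℕ) (hNA : 2 ≤ NA) (hNT : 1 ≤ NT)
    (σI σS σC δ : ℝ)
    (τT : ℝ)
    (τA : ℝ)
    (hden : (1 - τT) * (NA : ℝ) * (δ + σI - σC - (NA : ℝ) * (σS - σC))
        + (NA : ℝ) * (NT : ℝ) * τT * (σS - σC) ≠ 0)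
    (hτA : τA = ((1 - τT) * (δ - (NA : ℝ) * (σS - σI))
          + (NA : ℝ) * (NT : ℝ) * τT * (σS - σC))
        / ((1 - τT) * (NA : ℝ) * (δ + σI - σC - (NA : ℝ) * (σS - σC))
          + (NA : ℝ) * (NT : ℝ) * τT * (σS - σC))) :
    deriv (fun t => uA NA NT σI σS σC δ t τT) τA = 0 := by
  obtain ⟨n, rfl⟩ : ∃ n, NA = n + 2 := ⟨NA - 2, by omega⟩
  obtain ⟨m, rfl⟩ : ∃ m, NT = m + 1 := ⟨NT - 1, by omega⟩
  have hstat : uAStationaryDen (n + 2) (m + 1) σI σS σC δ τT * τA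
      = uAStationaryNum (n + 2) (m + 1) σI σS σC δ τT := by
    rw [mul_comm]
    exact (eq_div_iff_mul_eq hden).mp hτA
  rw [(hasDerivAt_uA n m σI σS σC δ τA τT).deriv, hstat, sub_self, mul_zero]

theorem stmt11 (NA NT : ℕ) (hNA : 2 ≤ NA) (hNT : 1 ≤ NT)
    (σI σS σC δ : ℝ) (hσI : 0 < σI) (hσS : 0 < σS) (hσC : 0 < σC) (hδ : 0 < δ)
    (τT : ℝ) (hτT : τT ∈ Set.Ico (0 : ℝ) 1)
    (τA : ℝ)
    (hden : (1 - τT) * (NA : ℝ) * (δ + σI - σC - (NA : ℝ) * (σS - σC))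
        + (NA : ℝ) * (NT : ℝ) * τT * (σS - σC) ≠ 0)
    (hτA : τA = ((1 - τT) * (δ - (NA : ℝ) * (σS - σI))
          + (NA : ℝ) * (NT : ℝ) * τT * (σS - σC))
        / ((1 - τT) * (NA : ℝ) * (δ + σI - σC - (NA : ℝ) * (σS - σC))
          + (NA : ℝ) * (NT : ℝ) * τT * (σS - σC))) :
    deriv (fun t => uA NA NT σI σS σC δ t τT) τA = 0 :=
  stmt11_general NA NT hNA hNT σI σS σC δ τT τA hden hτA
end

section
/- For τ_T ∈ [0,1), N_A ≥ 1, and σ_S = σ_C, the derivative of the AON expected age u_A with respect to τ_A at any τ_A ∈ [0,1) is nonnegative whenever δ̄ ≤ N_A(σ_S − σ_I); hence u_A is minimized at τ_A = 0 in this regime. -/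
def uA' (NA NT : ℕ) (σI σS δ τA τT : ℝ) : ℝ :=
  (1 - τA * (1 - τA) ^ (NA - 1) * (1 - τT) ^ NT) * δ
    + (1 - τA) ^ NA * (1 - τT) ^ NT * (σI - σS) + σS

theorem stmt12 (NA NT : ℕ) (hNA : 1 ≤ NA) (hNT : 1 ≤ NT)
    (σI σS δ : ℝ) (hσI : 0 < σI) (hI : σI < σS) (hδ : 0 < δ)
    (τT : ℝ) (hτT : τT ∈ Set.Ico (0 : ℝ) 1)
    (hreg : δ ≤ (NA : ℝ) * (σS - σI)) :
    (∀ τA ∈ Set.Ico (0 : ℝ) 1,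
        0 ≤ deriv (fun t => uA' NA NT σI σS δ t τT) τA) ∧
    (∀ τA ∈ Set.Icc (0 : ℝ) 1,
        uA' NA NT σI σS δ 0 τT ≤ uA' NA NT σI σS δ τA τT) := by
  obtain ⟨m, rfl⟩ : ∃ m, NA = m + 1 := ⟨NA - 1, (Nat.succ_pred_eq_of_pos hNA).symm⟩
  set c : ℝ := (1 - τT) ^ NT with hc
  have hc0 : 0 ≤ c := pow_nonneg (by linarith [hτT.2]) NT
  set f : ℝ → ℝ := fun t => uA' (m + 1) NT σI σS δ t τT with hf
  have hder : ∀ t : ℝ, HasDerivAt f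
      ((-(((1 : ℝ) * (1 - t) ^ m + t * (↑m * (1 - t) ^ (m - 1) * (-1))) * c)) * δ
        + (↑(m + 1) * (1 - t) ^ (m + 1 - 1) * (-1)) * c * (σI - σS)) t := by
    intro t
    have h1 : HasDerivAt (fun t : ℝ => 1 - t) (-1) t := (hasDerivAt_id t).const_sub 1
    have hpm : HasDerivAt (fun t : ℝ => (1 - t) ^ m) (↑m * (1 - t) ^ (m - 1) * (-1)) t :=
      h1.pow m
    have hprod : HasDerivAt (fun t : ℝ => t * (1 - t) ^ m)
        ((1 : ℝ) * (1 - t) ^ m + t * (↑m * (1 - t) ^ (m - 1) * (-1))) t :=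
      (hasDerivAt_id t).mul hpm
    have hA : HasDerivAt (fun t : ℝ => (1 - t * (1 - t) ^ m * c) * δ)
        ((-(((1 : ℝ) * (1 - t) ^ m + t * (↑m * (1 - t) ^ (m - 1) * (-1))) * c)) * δ) t :=
      ((hprod.mul_const c).const_sub 1).mul_const δ
    have hB : HasDerivAt (fun t : ℝ => (1 - t) ^ (m + 1) * c * (σI - σS))
        ((↑(m + 1) * (1 - t) ^ (m + 1 - 1) * (-1)) * c * (σI - σS)) t :=
      ((h1.pow (m + 1)).mul_const c).mul_const (σI - σS)
    exact (hA.add hB).add_const σS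
  have hderiv : ∀ t : ℝ, deriv f t =
      (-(((1 : ℝ) * (1 - t) ^ m + t * (↑m * (1 - t) ^ (m - 1) * (-1))) * c)) * δ
        + (↑(m + 1) * (1 - t) ^ (m + 1 - 1) * (-1)) * c * (σI - σS) :=
    fun t => (hder t).deriv
  have hkey : ∀ t ∈ Set.Ico (0 : ℝ) 1, 0 ≤ deriv f t := by
    intro t ht
    rw [hderiv]
    have h1t : (0 : ℝ) ≤ 1 - t := by linarith [ht.2]
    have hp1 : (0 : ℝ) ≤ (1 - t) ^ m := pow_nonneg h1t m
    have hp2 : (0 : ℝ) ≤ (1 - t) ^ (m - 1) := pow_nonneg h1t (m - 1)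
    have hm : (0 : ℝ) ≤ (m : ℝ) := Nat.cast_nonneg m
    have hreg' : δ ≤ ((m : ℝ) + 1) * (σS - σI) := by
      have : ((m + 1 : ℕ) : ℝ) = (m : ℝ) + 1 := by push_cast; ring
      linarith [hreg, this ▸ hreg]
    have ht0 : (0 : ℝ) ≤ t := ht.1
    simp only [Nat.add_sub_cancel, Nat.cast_add, Nat.cast_one]
    nlinarith [mul_nonneg (mul_nonneg (mul_nonneg hc0 hδ.le) ht0) (mul_nonneg hm hp2),
      mul_nonneg (mul_nonneg hc0 hp1) (sub_nonneg.2 hreg')]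
  refine ⟨hkey, ?_⟩
  have hdiff : Differentiable ℝ f := fun t => (hder t).differentiableAt
  have hmono : MonotoneOn f (Set.Icc (0 : ℝ) 1) := by
    apply monotoneOn_of_deriv_nonneg (convex_Icc 0 1) hdiff.continuous.continuousOn
      hdiff.differentiableOn
    intro x hx
    rw [interior_Icc] at hx
    exact hkey x ⟨hx.1.le, hx.2⟩
  intro τA hτA
  exact hmono (Set.left_mem_Icc.2 one_pos.le) hτA hτA.1
end
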